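/- Let (V, μ, α) be a multiplicative Hom-Jordan algebra over a field F. If D₁ lies in the α^k-quasicentroid QC_{α^k}(V) and D₂ lies in the α^s-quasicentroid QC_{α^s}(V) (k, s ≥ 0), then α ∘ D₁ lies in QC_{α^(k+1)}(V) and the anticommutator ν(D₁, D₂) = D₁ ∘ D₂ + D₂ ∘ D₁ lies in QC_{α^(k+s)}(V). (Hence the quasicentroid QC(V), equipped with the anticommutator product and the map D ↦ α ∘ D, is itself a Hom-Jordan algebra.) -/
import Mathlib


/-- `D` lies in the `α^k`-quasicentroid of the Hom-Jordan algebra `(V, μ, α)`. -/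
def InQCentroid {F V : Type*} [Field F] [AddCommGroup V] [Module F V]
    (μ : V →ₗ[F] V →ₗ[F] V) (α : V →ₗ[F] V) (k : ℕ) (D : V →ₗ[F] V) : Prop :=
  D ∘ₗ α = α ∘ₗ D ∧ ∀ x y : V, μ (D x) ((α ^ k) y) = μ ((α ^ k) x) (D y)

lemma comm_pow {F V : Type*} [Field F] [AddCommGroup V] [Module F V]
    {α D : V →ₗ[F] V} (h : D ∘ₗ α = α ∘ₗ D) (n : ℕ) (x : V) :
    D ((α ^ n) x) = (α ^ n) (D x) := by
  have h' : Commute D α := by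
    show D * α = α * D
    simpa [Module.End.mul_eq_comp] using h
  exact LinearMap.congr_fun (h'.pow_right n) x

theorem stmt14 {F V : Type*} [Field F] [AddCommGroup V] [Module F V]
    (μ : V →ₗ[F] V →ₗ[F] V) (α : V →ₗ[F] V)
    (hcomm : ∀ x y : V, μ x y = μ y x)
    (hJ : ∀ x y : V, μ (α (α x)) (μ y (μ x x)) = μ (μ (α x) y) (α (μ x x)))
    (hmult : ∀ x y : V, α (μ x y) = μ (α x) (α y))
    (k s : ℕ) (D₁ D₂ : V →ₗ[F] V)
    (h₁ : InQCentroid μ α k D₁) (h₂ : InQCentroid μ α s D₂) :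
    InQCentroid μ α (k + 1) (α ∘ₗ D₁) ∧
    InQCentroid μ α (k + s) (D₁ ∘ₗ D₂ + D₂ ∘ₗ D₁) := by
  obtain ⟨hc₁, hq₁⟩ := h₁
  obtain ⟨hc₂, hq₂⟩ := h₂
  have e₁ : ∀ z, D₁ (α z) = α (D₁ z) := fun z => LinearMap.congr_fun hc₁ z
  have e₂ : ∀ z, D₂ (α z) = α (D₂ z) := fun z => LinearMap.congr_fun hc₂ z
  have hks : ∀ z : V, (α ^ (k + s)) z = (α ^ k) ((α ^ s) z) := by
    intro z; rw [pow_add, Module.End.mul_apply]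
  have hsk : ∀ z : V, (α ^ (k + s)) z = (α ^ s) ((α ^ k) z) := by
    intro z; rw [add_comm, pow_add, Module.End.mul_apply]
  constructor
  · constructor
    · ext z; simp [e₁]
    · intro x y
      have hp : ∀ z : V, (α ^ (k + 1)) z = α ((α ^ k) z) := by
        intro z; rw [pow_succ', Module.End.mul_apply]
      rw [hp, hp, LinearMap.comp_apply, LinearMap.comp_apply, ← hmult, ← hmult, hq₁]
  · constructor
    · ext z; simp [e₁, e₂]
    · intro x y
      simp only [LinearMap.add_apply, LinearMap.comp_apply, map_add]
      have t1 : μ (D₁ (D₂ x)) ((α ^ (k + s)) y) = μ ((α ^ (k + s)) x) (D₂ (D₁ y)) := by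
        rw [hks y, hq₁ (D₂ x), ← comm_pow hc₂ k x, comm_pow hc₁ s y, hq₂, ← hsk x]
      have t2 : μ (D₂ (D₁ x)) ((α ^ (k + s)) y) = μ ((α ^ (k + s)) x) (D₁ (D₂ y)) := by
        rw [hsk y, hq₂ (D₁ x), ← comm_pow hc₁ s x, comm_pow hc₂ k y, hq₁, ← hks x]
      rw [t1, t2, add_comm]
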